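/- Suppose all valuations are monotone with V_i(∅) = 0 and the instance is decomposable. If for every group g there is an allocation π^g of the items of g to the agents in N_g that is envy-free for the restricted instance (V_i(π^g_i) ≥ V_i(π^g_j) for all agents i, j), then the combined allocation π defined by π_i = ⋃_g π^g_i for each agent i is an envy-free orientation of the whole instance: π_i ⊆ A_i and V_i(π_i) ≥ V_i(π_j) for all agents i, j. -/
import Mathlib


open scoped Classical

/-- The agent list `N_a` of an item `a`: the set of agents for which `a` is relevant. -/
noncomputable def agentList {N A : Type*} [Fintype N] [DecidableEq A]
    (V : N → Finset A → ℝ) (a : A) : Finset N :=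
  Finset.univ.filter (fun i => ∃ S : Finset A, V i (S.erase a) < V i S)

/-- The group of an item `a`: the set of all items with the same agent list as `a`. -/
noncomputable def group {N A : Type*} [Fintype N] [Fintype A] [DecidableEq A]
    (V : N → Finset A → ℝ) (a : A) : Finset A :=
  Finset.univ.filter (fun b => agentList V b = agentList V a)

/-- The value of a set only depends on the items relevant for the agent. -/
lemma val_filter_relevant {N A : Type*} [Fintype N] [DecidableEq N] [DecidableEq A]
    (V : N → Finset A → ℝ)
    (hmono : ∀ i : N, ∀ S' S : Finset A, S' ⊆ S → V i S' ≤ V i S)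
    (i : N) (S : Finset A) :
    V i S = V i (S.filter (fun a => i ∈ agentList V a)) := by
  induction S using Finset.strongInduction with
  | _ S ih =>
    by_cases h : ∀ a ∈ S, i ∈ agentList V a
    · rw [Finset.filter_true_of_mem h]
    · push_neg at h
      obtain ⟨a, haS, ha⟩ := h
      have hirr : ∀ T : Finset A, ¬ V i (T.erase a) < V i T := by
        intro T hT
        exact ha (by simp only [agentList, Finset.mem_filter, Finset.mem_univ,
          true_and]; exact ⟨T, hT⟩)
      have h1 : V i S = V i (S.erase a) :=
        le_antisymm (not_lt.mp (hirr S)) (hmono i _ _ (Finset.erase_subset a S))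
      rw [h1, ih (S.erase a) (Finset.erase_ssubset haS)]
      congr 1
      rw [Finset.filter_erase, Finset.erase_eq_of_notMem]
      simp [ha]

/-- Suppose all valuations are monotone with `V i ∅ = 0` and the
instance is decomposable. If `π` is an allocation of all items in which every item goes
to an agent in its agent list and whose restriction to each group is envy-free, then `π`
is an envy-free orientation of the whole instance. -/
theorem decomposable_groupwise_EF_gives_EF_orientation
    {N A : Type*} [Fintype N] [Fintype A] [DecidableEq N] [DecidableEq A]
    (V : N → Finset A → ℝ)
    (hmono : ∀ i : N, ∀ S' S : Finset A, S' ⊆ S → V i S' ≤ V i S)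
    (hzero : ∀ i : N, V i ∅ = 0)
    (hdecomp : ∀ a b : A,
      agentList V a = agentList V b ∨ (agentList V a ∩ agentList V b).card ≤ 1)
    (π : N → Finset A)
    (hdisj : ∀ i j : N, i ≠ j → Disjoint (π i) (π j))
    (hcover : ∀ a : A, ∃ i : N, a ∈ π i)
    (hlist : ∀ i : N, ∀ a ∈ π i, i ∈ agentList V a)
    (hgroupEF : ∀ (g : A) (i j : N),
      V i (π i ∩ group V g) ≥ V i (π j ∩ group V g)) :
    (∀ i : N, ∀ a ∈ π i, ∃ S : Finset A, V i (S.erase a) < V i S) ∧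
    (∀ i j : N, V i (π i) ≥ V i (π j)) := by
  constructor
  · intro i a ha
    have := hlist i a ha
    simpa [agentList] using this
  · intro i j
    by_cases hij : i = j
    · subst hij; exact le_refl _
    have hj : V i (π j) = V i ((π j).filter (fun a => i ∈ agentList V a)) :=
      val_filter_relevant V hmono i (π j)
    by_cases hne : ((π j).filter (fun a => i ∈ agentList V a)).Nonempty
    · obtain ⟨a, ha⟩ := hne
      rw [Finset.mem_filter] at ha
      obtain ⟨haj, hai⟩ := ha
      have haL : j ∈ agentList V a := hlist j a haj
      have hsub : (π j).filter (fun b => i ∈ agentList V b) ⊆ π j ∩ group V a := by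
        intro b hb
        rw [Finset.mem_filter] at hb
        obtain ⟨hbj, hbi⟩ := hb
        have hbL : j ∈ agentList V b := hlist j b hbj
        rw [Finset.mem_inter]
        refine ⟨hbj, ?_⟩
        rcases hdecomp b a with heq | hcard
        · simpa [group] using heq
        · exfalso
          have h2 : ({i, j} : Finset N) ⊆ agentList V b ∩ agentList V a := by
            intro x hx
            rcases Finset.mem_insert.mp hx with rfl | hx
            · exact Finset.mem_inter.mpr ⟨hbi, hai⟩
            · rw [Finset.mem_singleton] at hx; subst hx
              exact Finset.mem_inter.mpr ⟨hbL, haL⟩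
          have := Finset.card_le_card h2
          rw [Finset.card_pair hij] at this
          omega
      calc V i (π j) = V i ((π j).filter (fun b => i ∈ agentList V b)) := hj
        _ ≤ V i (π j ∩ group V a) := hmono i _ _ hsub
        _ ≤ V i (π i ∩ group V a) := hgroupEF a i j
        _ ≤ V i (π i) := hmono i _ _ Finset.inter_subset_left
    · rw [Finset.not_nonempty_iff_eq_empty] at hne
      rw [hj, hne, hzero]
      have := hmono i ∅ (π i) (Finset.empty_subset _)
      rwa [hzero] at this
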